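/- Let H(t,x,y) := (4πt)^{-1}·exp(−‖x−y‖²/(4t)) and let N(t,x,y) := y·∇_y H(t,x,y) for t > 0, extended by N(t,x,y) := 0 for t ≤ 0. There is a constant C > 0 such that for every t ∈ (0,1], every x ∈ S¹, and every bounded measurable function g : (0,∞) × S¹ → ℝ, | ∫₀^t ∫_{S¹} g(s,y)·N(t−s,x,y) dσ(y) ds | ≤ C·t^{1/2}·sup|g|. (This is the bound |Ng(t,x)| ≤ C t^{1/2} ‖g‖_{L^∞} for the boundary double-layer heat potential operator N.) -/

import Mathlib

/-!
On the unit circle `⟪y, x - y⟫ = -‖x - y‖² / 2`, so for `τ > 0` the kernel is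
`N(τ,x,y) = -(4πτ)⁻¹ z e^{-z}` with `z = ‖x - y‖² / (4τ)`; since `z ≤ e^{z/2}` it is
dominated by `(4πτ)⁻¹ e^{-‖x - y‖²/(8τ)}`. The parametrization of the circle by the angle `θ`
measured from `x` is 1-Lipschitz, so `σ` is dominated by `dθ` on `[-π, π]`, and there
`‖x - y‖² = 2 - 2 cos θ ≥ 4θ²/π²`. The spatial integral is therefore bounded by a Gaussian
integral of size `τ^{-1/2}`, and `∫₀ᵗ (t - s)^{-1/2} ds = 2√t`.
-/

open Metric Set MeasureTheory Filter Real
open scoped RealInnerProductSpace MeasureTheory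

noncomputable section

/-- The plane `ℝ²`, as a Euclidean space. -/
abbrev E2 := EuclideanSpace ℝ (Fin 2)

/-- Counterclockwise rotation of `x` by `90°`:  `x^⊥ = (-x₂, x₁)`. -/
def perp (x : E2) : E2 := WithLp.toLp 2 ![-(x 1), x 0]

/-- The two-dimensional heat kernel `H(t,x,y) = (4πt)⁻¹ exp(-‖x-y‖²/(4t))`. -/
def heatK (t : ℝ) (x y : E2) : ℝ := (4 * π * t)⁻¹ * Real.exp (-‖x - y‖^2 / (4 * t))

/-- The kernel `N(t,x,y) = y ⬝ ∇_y H(t,x,y)` for `t > 0`, extended by `0` for `t ≤ 0`. -/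
def NkerExt (t : ℝ) (x y : E2) : ℝ :=
  if 0 < t then ⟪y, gradient (fun z => heatK t x z) y⟫ else 0

section HeatKernel

lemma hasGradientAt_heatK {t : ℝ} (ht : 0 < t) (x y : E2) :
    HasGradientAt (fun z => heatK t x z)
      (((8 * π * t ^ 2)⁻¹ * Real.exp (-‖x - y‖ ^ 2 / (4 * t))) • (x - y)) y := by
  have hexp := (Real.hasDerivAt_exp _).comp_hasFDerivAt y
    ((((hasFDerivAt_id y).const_sub x).norm_sq).mul_const (-(4 * t)⁻¹))
  have hfun : (fun z => heatK t x z)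
      = fun z => (4 * π * t)⁻¹ * Real.exp (‖x - z‖ ^ 2 * -(4 * t)⁻¹) := by
    funext z
    simp only [heatK]
    ring_nf
  rw [hasGradientAt_iff_hasFDerivAt, hfun]
  refine (hexp.const_mul _).congr_fderiv ?_
  ext v
  simp only [mul_inv_rev, id_eq, mul_neg, map_sub, ContinuousLinearMap.comp_neg,
    ContinuousLinearMap.comp_id, neg_sub, neg_smul, smul_neg, neg_apply, smul_apply, sub_apply,
    coe_innerSL_apply, nsmul_eq_mul, Nat.cast_ofNat, smul_eq_mul, map_smul,
    InnerProductSpace.toDual_apply_apply]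
  field_simp
  ring

lemma NkerExt_of_pos {t : ℝ} (ht : 0 < t) (x y : E2) :
    NkerExt t x y = (8 * π * t ^ 2)⁻¹ * Real.exp (-‖x - y‖ ^ 2 / (4 * t)) * ⟪y, x - y⟫ := by
  rw [NkerExt, if_pos ht, (hasGradientAt_heatK ht x y).gradient, real_inner_smul_right]

lemma continuous_NkerExt {t : ℝ} (ht : 0 < t) (x : E2) : Continuous (NkerExt t x) := by
  simp only [funext (NkerExt_of_pos ht x)]
  fun_prop

lemma inner_sub_of_norm_eq_one {x y : E2} (hx : ‖x‖ = 1) (hy : ‖y‖ = 1) :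
    ⟪y, x - y⟫ = -‖x - y‖ ^ 2 / 2 := by
  rw [inner_sub_right, real_inner_self_eq_norm_sq, real_inner_comm, norm_sub_sq_real, hx, hy]
  ring

lemma le_exp_half {z : ℝ} (hz : 0 ≤ z) : z ≤ Real.exp (z / 2) := by
  have h := Real.add_one_le_exp (z / 4)
  have hsq : Real.exp (z / 2) = Real.exp (z / 4) ^ 2 := by rw [← Real.exp_nat_mul]; ring_nf
  nlinarith [sq_nonneg (z / 4 - 1), pow_le_pow_left₀ (by linarith) h 2]

lemma mul_exp_neg_le_exp_neg_half {z : ℝ} (hz : 0 ≤ z) :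
    z * Real.exp (-z) ≤ Real.exp (-(z / 2)) := by
  calc z * Real.exp (-z) ≤ Real.exp (z / 2) * Real.exp (-z) :=
        mul_le_mul_of_nonneg_right (le_exp_half hz) (Real.exp_pos _).le
    _ = Real.exp (-(z / 2)) := by rw [← Real.exp_add]; ring_nf

lemma abs_NkerExt_le {t : ℝ} (ht : 0 < t) {x y : E2} (hx : ‖x‖ = 1) (hy : ‖y‖ = 1) :
    |NkerExt t x y| ≤ (4 * π * t)⁻¹ * Real.exp (-‖x - y‖ ^ 2 / (8 * t)) := by
  have hz : 0 ≤ ‖x - y‖ ^ 2 / (4 * t) := by positivity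
  calc |NkerExt t x y|
      = (4 * π * t)⁻¹ * (‖x - y‖ ^ 2 / (4 * t) * Real.exp (-(‖x - y‖ ^ 2 / (4 * t)))) := by
        rw [NkerExt_of_pos ht, inner_sub_of_norm_eq_one hx hy, abs_of_nonpos]
        · field_simp
          ring_nf
        · exact mul_nonpos_of_nonneg_of_nonpos (by positivity)
            (div_nonpos_of_nonpos_of_nonneg (neg_nonpos.2 (sq_nonneg _)) zero_le_two)
    _ ≤ (4 * π * t)⁻¹ * Real.exp (-(‖x - y‖ ^ 2 / (4 * t) / 2)) := by
        gcongr
        exact mul_exp_neg_le_exp_neg_half hz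
    _ = (4 * π * t)⁻¹ * Real.exp (-‖x - y‖ ^ 2 / (8 * t)) := by ring_nf

end HeatKernel

section CircleParam

lemma perp_apply_zero (x : E2) : perp x 0 = -x 1 := rfl

lemma perp_apply_one (x : E2) : perp x 1 = x 0 := rfl

lemma inner_eq_fin_two (a b : E2) : ⟪a, b⟫ = a 0 * b 0 + a 1 * b 1 := by
  simp [PiLp.inner_apply, Fin.sum_univ_two, mul_comm]

lemma inner_self_perp (x : E2) : ⟪x, perp x⟫ = 0 := by
  rw [inner_eq_fin_two, perp_apply_zero, perp_apply_one]; ring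

lemma inner_perp_perp (a b : E2) : ⟪perp a, perp b⟫ = ⟪a, b⟫ := by
  simp only [inner_eq_fin_two, perp_apply_zero, perp_apply_one]; ring

lemma inner_smul_add_inner_perp_smul (x y : E2) :
    ⟪x, y⟫ • x + ⟪perp x, y⟫ • perp x = ‖x‖ ^ 2 • y := by
  have hx : ‖x‖ ^ 2 = x 0 ^ 2 + x 1 ^ 2 := by
    rw [← real_inner_self_eq_norm_sq, inner_eq_fin_two]; ring
  ext i
  fin_cases i <;>
  · simp [inner_eq_fin_two, perp, hx]
    ring

def circleParam (x : E2) (θ : ℝ) : E2 := Real.cos θ • x + Real.sin θ • perp x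

@[simp]
lemma circleParam_zero (x : E2) : circleParam x 0 = x := by simp [circleParam]

variable {x : E2}

lemma inner_circleParam (hx : ‖x‖ = 1) (θ₁ θ₂ : ℝ) :
    ⟪circleParam x θ₁, circleParam x θ₂⟫ = Real.cos (θ₁ - θ₂) := by
  have hxx : ⟪x, x⟫ = 1 := by rw [real_inner_self_eq_norm_sq, hx, one_pow]
  simp only [circleParam, inner_add_left, inner_add_right, real_inner_smul_left,
    real_inner_smul_right, inner_perp_perp, inner_self_perp, real_inner_comm x (perp x), hxx,
    Real.cos_sub]
  ring

lemma norm_circleParam (hx : ‖x‖ = 1) (θ : ℝ) : ‖circleParam x θ‖ = 1 := by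
  have h := inner_circleParam hx θ θ
  rwa [sub_self, Real.cos_zero, real_inner_self_eq_norm_sq,
    pow_eq_one_iff_of_nonneg (norm_nonneg _) two_ne_zero] at h

lemma norm_circleParam_sub_sq (hx : ‖x‖ = 1) (θ₁ θ₂ : ℝ) :
    ‖circleParam x θ₁ - circleParam x θ₂‖ ^ 2 = 2 - 2 * Real.cos (θ₁ - θ₂) := by
  rw [norm_sub_sq_real, inner_circleParam hx, norm_circleParam hx, norm_circleParam hx]
  ring

lemma norm_sub_circleParam_sq (hx : ‖x‖ = 1) (θ : ℝ) :
    ‖x - circleParam x θ‖ ^ 2 = 2 - 2 * Real.cos θ := by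
  simpa using norm_circleParam_sub_sq hx 0 θ

lemma lipschitzWith_circleParam (hx : ‖x‖ = 1) : LipschitzWith 1 (circleParam x) := by
  refine LipschitzWith.of_dist_le_mul fun θ₁ θ₂ => ?_
  rw [dist_eq_norm, Real.dist_eq, NNReal.coe_one, one_mul, ← Real.sqrt_sq (norm_nonneg _),
    ← Real.sqrt_sq_eq_abs]
  refine Real.sqrt_le_sqrt ?_
  rw [norm_circleParam_sub_sq hx]
  linarith [Real.one_sub_sq_div_two_le_cos (x := θ₁ - θ₂)]

lemma sphere_subset_image_circleParam (hx : ‖x‖ = 1) :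
    sphere (0 : E2) 1 ⊆ circleParam x '' Icc (-π) π := by
  intro y hy
  rw [mem_sphere_zero_iff_norm] at hy
  have hdecomp := inner_smul_add_inner_perp_smul x y
  rw [hx, one_pow, one_smul] at hdecomp
  set z : ℂ := ⟨⟪x, y⟫, ⟪perp x, y⟫⟩
  have hz : ‖z‖ = 1 := by
    have h : ⟪⟪x, y⟫ • x + ⟪perp x, y⟫ • perp x, y⟫ = 1 := by
      rw [hdecomp, real_inner_self_eq_norm_sq, hy, one_pow]
    rw [inner_add_left, real_inner_smul_left, real_inner_smul_left] at h
    rw [Complex.norm_def, Complex.normSq_mk, h, Real.sqrt_one]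
  have hz0 : z ≠ 0 := norm_ne_zero_iff.mp (by rw [hz]; exact one_ne_zero)
  refine ⟨Complex.arg z, ⟨(Complex.neg_pi_lt_arg z).le, Complex.arg_le_pi z⟩, ?_⟩
  rw [circleParam, Complex.cos_arg hz0, Complex.sin_arg, hz, div_one, div_one]
  exact hdecomp

lemma restrict_sphere_le_map_circleParam (hx : ‖x‖ = 1) :
    (μH[1] : Measure E2).restrict (sphere 0 1)
      ≤ Measure.map (circleParam x) (volume.restrict (Icc (-π) π)) := by
  have hmeas := (lipschitzWith_circleParam hx).continuous.measurable
  refine Measure.le_iff.mpr fun S hS => ?_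
  rw [Measure.restrict_apply hS, Measure.map_apply hmeas hS, Measure.restrict_apply (hmeas hS)]
  have hsub : S ∩ sphere 0 1 ⊆ circleParam x '' (circleParam x ⁻¹' S ∩ Icc (-π) π) := by
    rintro z ⟨hzS, hz⟩
    obtain ⟨θ, hθ, rfl⟩ := sphere_subset_image_circleParam hx hz
    exact ⟨θ, ⟨hzS, hθ⟩, rfl⟩
  calc μH[1] (S ∩ sphere 0 1)
      ≤ μH[1] (circleParam x '' (circleParam x ⁻¹' S ∩ Icc (-π) π)) := measure_mono hsub
    _ ≤ (1 : NNReal) ^ (1 : ℝ) * μH[1] (circleParam x ⁻¹' S ∩ Icc (-π) π) :=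
        (lipschitzWith_circleParam hx).hausdorffMeasure_image_le zero_le_one _
    _ = volume (circleParam x ⁻¹' S ∩ Icc (-π) π) := by
        rw [hausdorffMeasure_real]; simp

end CircleParam

section SliceBound

variable {x : E2}

lemma integrable_map_circleParam (hx : ‖x‖ = 1) {Φ : E2 → ℝ} (hΦ : Continuous Φ) :
    Integrable Φ (Measure.map (circleParam x) (volume.restrict (Icc (-π) π))) := by
  have hcont := (lipschitzWith_circleParam hx).continuous
  rw [integrable_map_measure hΦ.aestronglyMeasurable hcont.measurable.aemeasurable]
  exact (hΦ.comp hcont).integrableOn_Icc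

lemma setIntegral_sphere_le_setIntegral_circleParam (hx : ‖x‖ = 1) {Φ : E2 → ℝ}
    (hΦ : Continuous Φ) (hΦ₀ : 0 ≤ Φ) :
    ∫ y in sphere (0 : E2) 1, Φ y ∂μH[1] ≤ ∫ θ in Icc (-π) π, Φ (circleParam x θ) := by
  have hcont := (lipschitzWith_circleParam hx).continuous
  rw [← integral_map hcont.measurable.aemeasurable hΦ.aestronglyMeasurable]
  exact integral_mono_measure (restrict_sphere_le_map_circleParam hx) (.of_forall hΦ₀)
    (integrable_map_circleParam hx hΦ)

lemma abs_NkerExt_circleParam_le {t θ : ℝ} (ht : 0 < t) (hx : ‖x‖ = 1)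
    (hθ : θ ∈ Icc (-π) π) :
    |NkerExt t x (circleParam x θ)|
      ≤ (4 * π * t)⁻¹ * Real.exp (-(2 * π ^ 2 * t)⁻¹ * θ ^ 2) := by
  refine (abs_NkerExt_le ht hx (norm_circleParam hx θ)).trans ?_
  gcongr
  have hcos := Real.cos_le_one_sub_mul_cos_sq (abs_le.mpr hθ)
  rw [norm_sub_circleParam_sq hx, div_le_iff₀ (by positivity)]
  calc -(2 - 2 * Real.cos θ) ≤ -(4 / π ^ 2 * θ ^ 2) := by
        linarith [show 4 / π ^ 2 * θ ^ 2 = 2 * (2 / π ^ 2 * θ ^ 2) by ring]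
    _ = -(2 * π ^ 2 * t)⁻¹ * θ ^ 2 * (8 * t) := by field_simp; ring

lemma setIntegral_sphere_abs_NkerExt_le {t : ℝ} (ht : 0 < t) (hx : ‖x‖ = 1) :
    ∫ y in sphere (0 : E2) 1, |NkerExt t x y| ∂μH[1]
      ≤ √(2 * π) / 4 * t ^ (-(1 / 2 : ℝ)) := by
  set b := (2 * π ^ 2 * t)⁻¹
  have hb : 0 < b := by positivity
  have hgauss : Integrable fun θ : ℝ => (4 * π * t)⁻¹ * Real.exp (-b * θ ^ 2) :=
    (integrable_exp_neg_mul_sq hb).const_mul _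
  calc ∫ y in sphere (0 : E2) 1, |NkerExt t x y| ∂μH[1]
      ≤ ∫ θ in Icc (-π) π, |NkerExt t x (circleParam x θ)| :=
        setIntegral_sphere_le_setIntegral_circleParam hx (continuous_NkerExt ht x).abs
          fun _ => abs_nonneg _
    _ ≤ ∫ θ in Icc (-π) π, (4 * π * t)⁻¹ * Real.exp (-b * θ ^ 2) :=
        setIntegral_mono_on
          ((continuous_NkerExt ht x).abs.comp (lipschitzWith_circleParam hx).continuous
            |>.integrableOn_Icc) hgauss.integrableOn measurableSet_Icc
          fun θ hθ => abs_NkerExt_circleParam_le ht hx hθ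
    _ ≤ ∫ θ, (4 * π * t)⁻¹ * Real.exp (-b * θ ^ 2) :=
        setIntegral_le_integral hgauss (.of_forall fun _ => by positivity)
    _ = (4 * π * t)⁻¹ * √(π / b) := by rw [integral_const_mul, integral_gaussian]
    _ = √(2 * π) / 4 * t ^ (-(1 / 2 : ℝ)) := by
        have hsqrt : √(π / b) = π * √(2 * π) * √t := by
          rw [show π / b = π ^ 2 * (2 * π) * t by simp only [b]; field_simp,
            Real.sqrt_mul (by positivity), Real.sqrt_mul (by positivity),
            Real.sqrt_sq pi_pos.le]
        rw [hsqrt, Real.rpow_neg ht.le, ← Real.sqrt_eq_rpow]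
        field_simp
        exact Real.sq_sqrt ht.le

lemma abs_setIntegral_sphere_mul_NkerExt_le {t M : ℝ} (ht : 0 < t) (hx : ‖x‖ = 1)
    {G : E2 → ℝ} (hG : ∀ y ∈ sphere (0 : E2) 1, |G y| ≤ M) :
    |∫ y in sphere (0 : E2) 1, G y * NkerExt t x y ∂μH[1]|
      ≤ M * (√(2 * π) / 4 * t ^ (-(1 / 2 : ℝ))) := by
  have hM : 0 ≤ M := (abs_nonneg _).trans (hG x (by simpa using hx))
  have hbound : IntegrableOn (fun y => M * |NkerExt t x y|) (sphere 0 1) μH[1] :=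
    (integrable_map_circleParam hx (continuous_const.mul (continuous_NkerExt ht x).abs))
      |>.mono_measure (restrict_sphere_le_map_circleParam hx)
  calc |∫ y in sphere (0 : E2) 1, G y * NkerExt t x y ∂μH[1]|
      ≤ ∫ y in sphere (0 : E2) 1, M * |NkerExt t x y| ∂μH[1] := by
        rw [← Real.norm_eq_abs]
        refine norm_integral_le_of_norm_le hbound ?_
        filter_upwards [ae_restrict_mem isClosed_sphere.measurableSet] with y hy
        rw [Real.norm_eq_abs, abs_mul]
        exact mul_le_mul_of_nonneg_right (hG y hy) (abs_nonneg _)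
    _ ≤ M * (√(2 * π) / 4 * t ^ (-(1 / 2 : ℝ))) := by
        rw [integral_const_mul]
        exact mul_le_mul_of_nonneg_left (setIntegral_sphere_abs_NkerExt_le ht hx) hM

end SliceBound

section TimeIntegral

variable {t r : ℝ}

lemma integrableOn_Ioo_sub_rpow (ht : 0 ≤ t) (hr : -1 < r) :
    IntegrableOn (fun s => (t - s) ^ r) (Ioo 0 t) := by
  rw [← intervalIntegrable_iff_integrableOn_Ioo_of_le ht]
  simpa using
    ((intervalIntegral.intervalIntegrable_rpow' (a := 0) (b := t) hr).comp_sub_left t).symm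

lemma integral_Ioo_sub_rpow (ht : 0 ≤ t) (hr : -1 < r) :
    ∫ s in Ioo 0 t, (t - s) ^ r = t ^ (r + 1) / (r + 1) := by
  rw [← integral_Ioc_eq_integral_Ioo, ← intervalIntegral.integral_of_le ht,
    intervalIntegral.integral_comp_sub_left (fun u => u ^ r), sub_self, sub_zero,
    integral_rpow (.inl hr), Real.zero_rpow (by linarith), sub_zero]

end TimeIntegral

/-- The bound `|Ng(t,x)| ≤ C t^{1/2} ‖g‖_{L^∞}` for the boundary double-layer heat
potential: there is `C > 0` such that for every `t ∈ (0,1]`, `x ∈ S¹`, and every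
bounded measurable `g` on `(0,∞) × S¹`,
`|∫₀^t ∫_{S¹} g(s,y) N(t-s,x,y) dσ(y) ds| ≤ C t^{1/2} sup|g|`. -/
theorem stmt13 : ∃ C > (0:ℝ), ∀ t ∈ Ioc (0:ℝ) 1, ∀ x : E2, ‖x‖ = 1 →
    ∀ g : ℝ → E2 → ℝ, Measurable (fun p : ℝ × E2 => g p.1 p.2) →
    ∀ M : ℝ, (∀ s > (0:ℝ), ∀ y ∈ sphere (0:E2) 1, |g s y| ≤ M) →
    |∫ s in Ioo (0:ℝ) t, ∫ y in sphere (0:E2) 1, g s y * NkerExt (t - s) x y ∂(μH[1])|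
      ≤ C * Real.sqrt t * M := by
  refine ⟨√(2 * π) / 2, by positivity, ?_⟩
  rintro t ⟨ht, -⟩ x hx g - M hg
  have hr : -1 < -(1 / 2 : ℝ) := by norm_num
  have hbound :
      IntegrableOn (fun s => M * (√(2 * π) / 4 * (t - s) ^ (-(1 / 2 : ℝ)))) (Ioo 0 t) :=
    ((integrableOn_Ioo_sub_rpow ht.le hr).const_mul _).const_mul _
  rw [← Real.norm_eq_abs]
  calc ‖∫ s in Ioo 0 t, ∫ y in sphere (0 : E2) 1, g s y * NkerExt (t - s) x y ∂μH[1]‖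
      ≤ ∫ s in Ioo 0 t, M * (√(2 * π) / 4 * (t - s) ^ (-(1 / 2 : ℝ))) := by
        refine norm_integral_le_of_norm_le hbound ?_
        filter_upwards [ae_restrict_mem measurableSet_Ioo] with s hs
        exact abs_setIntegral_sphere_mul_NkerExt_le (sub_pos.mpr hs.2) hx (hg s hs.1)
    _ = √(2 * π) / 2 * √t * M := by
        rw [integral_const_mul, integral_const_mul, integral_Ioo_sub_rpow ht.le hr,
          Real.sqrt_eq_rpow t]
        norm_num
        ring
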